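/- arXiv:1111.2895 — 6 statements merged into one kernel-verified Lean document; each statement's English description precedes it below -/
import Mathlib

section
/- For every q ≥ 1 and n ≥ 5, the independence number of AΓ_n^q equals (n-1)!·(n!)^{q-1}/2^q. -/
/-!
Lower bound: the vertices whose `k`-th coordinate fixes a point form an independent set of size
`|Stab(i)| · |A_n|^(q-1)`.

Upper bound (clique–coclique): there are `n` even permutations that pairwise disagree
everywhere, i.e. the rows of a Latin square of even permutations: the translations of `ℤ/n` for
`n` odd, and twisted translations of `ℤ/2 × ℤ/m` for `n = 2m`. They form a clique `C` of `AΓ_n`,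
and for an independent set `I` of `AΓ_n^q` the translates `c⁻¹ · I`, `c ∈ C`, are pairwise
disjoint, so `n · |I| ≤ |A_n|^q`.
-/

/-- The set of even derangements: fixed-point-free elements of the alternating group. -/
def evenDerangements (n : ℕ) : Set (alternatingGroup (Fin n)) :=
  {σ | ∀ i : Fin n, (σ : Equiv.Perm (Fin n)) i ≠ i}

lemma evenDerangements_inv {n : ℕ} {g : alternatingGroup (Fin n)}
    (hg : g ∈ evenDerangements n) : g⁻¹ ∈ evenDerangements n := by
  intro i hi
  apply hg i
  have h1 : ((g : Equiv.Perm (Fin n)))⁻¹ i = i := by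
    simpa using hi
  conv_lhs => rw [← h1]
  simp

/-- The tensor power `AΓ_n^q` of the even derangement graph. -/
def AGamma (n q : ℕ) : SimpleGraph (Fin q → alternatingGroup (Fin n)) where
  Adj σ τ := σ ≠ τ ∧ ∀ k, σ k * (τ k)⁻¹ ∈ evenDerangements n
  symm := by
    constructor
    rintro σ τ ⟨hne, h⟩
    refine ⟨hne.symm, fun k => ?_⟩
    have := evenDerangements_inv (h k)
    simpa [mul_inv_rev] using this
  loopless := ⟨fun σ h => h.1 rfl⟩

/-- The even derangement graph `AΓ_n`. -/
def AGammaOne (n : ℕ) : SimpleGraph (alternatingGroup (Fin n)) where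
  Adj σ τ := σ ≠ τ ∧ σ * τ⁻¹ ∈ evenDerangements n
  symm := by
    constructor
    rintro σ τ ⟨hne, h⟩
    refine ⟨hne.symm, ?_⟩
    have := evenDerangements_inv h
    simpa [mul_inv_rev] using this
  loopless := ⟨fun σ h => h.1 rfl⟩

/-- The maximum independent set candidates `B_{i,j}^{(k)}`. -/
def B (n q : ℕ) (i j : Fin n) (k : Fin q) : Set (Fin q → alternatingGroup (Fin n)) :=
  {σ | (σ k : Equiv.Perm (Fin n)) i = j}

/-- A set of vertices is independent if no two of its members are adjacent. -/
def IsIndep {V : Type*} (G : SimpleGraph V) (s : Set V) : Prop :=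
  s.Pairwise fun u v => ¬ G.Adj u v

open Equiv Equiv.Perm MulAction

def IsLatinFamily {ι X : Type*} (g : ι → Perm X) : Prop :=
  Pairwise fun a b => ∀ x, g a x ≠ g b x

def HasEvenLatinFamily (X : Type*) [Fintype X] [DecidableEq X] : Prop :=
  ∃ g : X → Perm X, IsLatinFamily g ∧ ∀ a, sign (g a) = 1

section LatinFamily

variable {X Y L : Type*}

theorem HasEvenLatinFamily.of_equiv [Fintype X] [DecidableEq X] [Fintype Y] [DecidableEq Y]
    (h : HasEvenLatinFamily X) (e : X ≃ Y) : HasEvenLatinFamily Y := by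
  obtain ⟨g, hg, hsign⟩ := h
  refine ⟨fun b => e.permCongr (g (e.symm b)), fun a b hab x hx => ?_, fun b => ?_⟩
  · simp only [permCongr_apply, EmbeddingLike.apply_eq_iff_eq] at hx
    exact hg (e.symm.injective.ne hab) _ hx
  · rw [sign_permCongr, hsign]

theorem isLatinFamily_addLeft [AddGroup X] : IsLatinFamily fun a : X => Equiv.addLeft a :=
  fun _ _ hab _ h => hab (add_right_cancel h)

theorem sign_addLeft_of_odd_card [AddGroup X] [Fintype X] [DecidableEq X]
    (h : Odd (Fintype.card X)) (a : X) : sign (Equiv.addLeft a) = 1 := by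
  have : sign (Equiv.addLeft a) ^ Fintype.card X = 1 := by
    rw [← map_pow, nsmul_addLeft, card_nsmul_eq_zero, addLeft_zero, map_one]
  rwa [Int.units_pow_eq_pow_mod_two, Nat.odd_iff.mp h, pow_one] at this

theorem hasEvenLatinFamily_of_odd_card [AddGroup X] [Fintype X] [DecidableEq X]
    (h : Odd (Fintype.card X)) : HasEvenLatinFamily X :=
  ⟨_, isLatinFamily_addLeft, sign_addLeft_of_odd_card h⟩

theorem isLatinFamily_addLeft_mul_of_fst [AddGroup L] [AddGroup Y] {τ : L → Perm (L × Y)}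
    (hτ : ∀ e p, (τ e p).1 = p.1) :
    IsLatinFamily fun c : L × Y => Equiv.addLeft c * τ c.1 := by
  intro c d hcd p h
  have hfst : c.1 = d.1 := by
    simpa only [Perm.mul_apply, coe_addLeft, Prod.fst_add, hτ, add_left_inj]
      using congrArg Prod.fst h
  rw [Perm.mul_apply, Perm.mul_apply, hfst, coe_addLeft, coe_addLeft] at h
  exact hcd (add_right_cancel h)

theorem sign_addLeft_prod [AddGroup L] [Fintype L] [DecidableEq L] [AddGroup Y] [Fintype Y]
    [DecidableEq Y] (c : L × Y) :
    sign (Equiv.addLeft c) = sign (Equiv.addLeft c.1) ^ Fintype.card Y *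
      sign (Equiv.addLeft c.2) ^ Fintype.card L := by
  have : Equiv.addLeft c = prodCongrLeft (fun _ => Equiv.addLeft c.1) *
      prodCongrRight (fun _ => Equiv.addLeft c.2) := by
    ext p <;> simp
  rw [this, map_mul, sign_prodCongrLeft, sign_prodCongrRight, Finset.prod_const,
    Finset.prod_const, Finset.card_univ, Finset.card_univ]

theorem swap_pow_apply_fst [DecidableEq L] [DecidableEq Y] (e : L) (y₀ y₁ : Y) (k : ℕ)
    (p : L × Y) :
    ((swap (e, y₀) (e, y₁) ^ k) p).1 = p.1 := by
  induction k generalizing p with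
  | zero => rfl
  | succ k ih =>
    rw [pow_succ, Perm.mul_apply, ih]
    rcases eq_or_ne p (e, y₀) with rfl | h₀
    · simp
    rcases eq_or_ne p (e, y₁) with rfl | h₁
    · simp
    rw [swap_apply_of_ne_of_ne h₀ h₁]

theorem hasEvenLatinFamily_fin_two_prod [AddGroup Y] [Fintype Y] [DecidableEq Y]
    (hY : 1 < Fintype.card Y) : HasEvenLatinFamily (Fin 2 × Y) := by
  obtain ⟨y₀, y₁, hy⟩ := Fintype.exists_pair_of_one_lt_card hY
  -- Rows `(1, v)` exchange the two layers, of sign `(-1)^|Y|`; the twist `τ 1`, a power of a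
  -- swap inside layer `0`, compensates for it.
  let τ (e : Fin 2) : Perm (Fin 2 × Y) := swap (0, y₀) (0, y₁) ^ (e.val * Fintype.card Y)
  refine ⟨fun c => Equiv.addLeft c * τ c.1,
    isLatinFamily_addLeft_mul_of_fst fun _ => swap_pow_apply_fst 0 y₀ y₁ _, fun c => ?_⟩
  have hT : sign (swap ((0 : Fin 2), y₀) (0, y₁)) = -1 := sign_swap (by simpa using hy)
  have hL : ∀ e : Fin 2, sign (Equiv.addLeft e) = (-1) ^ e.val := by decide
  rw [map_mul, sign_addLeft_prod, map_pow, hT, hL, Fintype.card_fin, Int.units_sq, mul_one,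
    ← pow_mul, ← pow_add, ← two_mul, pow_mul, Int.units_sq, one_pow]

end LatinFamily

theorem hasEvenLatinFamily_fin {n : ℕ} (hn : 3 ≤ n) : HasEvenLatinFamily (Fin n) := by
  rcases n.even_or_odd with ⟨m, rfl⟩ | hodd
  · have : NeZero m := ⟨by omega⟩
    refine (hasEvenLatinFamily_fin_two_prod (Y := ZMod m) ?_).of_equiv
      (Fintype.equivFinOfCardEq ?_)
    · rw [ZMod.card]; omega
    · rw [Fintype.card_prod, ZMod.card, Fintype.card_fin]; ring
  · have : NeZero n := ⟨by omega⟩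
    exact (hasEvenLatinFamily_of_odd_card (by rwa [ZMod.card])).of_equiv
      (Fintype.equivFinOfCardEq (ZMod.card n))

theorem exists_pairwise_adj_AGammaOne {n : ℕ} (hn : 3 ≤ n) :
    ∃ c : Fin n → alternatingGroup (Fin n),
      Pairwise fun a b => (AGammaOne n).Adj (c a) (c b) := by
  obtain ⟨g, hg, hsign⟩ := hasEvenLatinFamily_fin hn
  refine ⟨fun a => ⟨g a, mem_alternatingGroup.mpr (hsign a)⟩,
    fun a b hab => ⟨fun h => ?_, ?_⟩⟩
  · exact hg hab a (by rw [Subtype.mk.inj h])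
  · intro x hx
    apply hg hab ((g b)⁻¹ x)
    simpa [Perm.mul_apply, eq_comm] using hx

theorem IsIndep.ncard_mul_card_le {n q : ℕ} (hq : 0 < q)
    {I : Set (Fin q → alternatingGroup (Fin n))} (hI : IsIndep (AGamma n q) I)
    {ι : Type*} [Finite ι] {c : ι → alternatingGroup (Fin n)}
    (hc : Pairwise fun a b => (AGammaOne n).Adj (c a) (c b)) :
    I.ncard * Nat.card ι ≤ Nat.card (alternatingGroup (Fin n)) ^ q := by
  have hinj : Function.Injective fun p : I × ι => fun k => (c p.2)⁻¹ * p.1.1 k := by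
    rintro ⟨⟨x, hx⟩, a⟩ ⟨⟨y, hy⟩, b⟩ h
    have hk : ∀ k, x k * (y k)⁻¹ = c a * (c b)⁻¹ := fun k => by
      rw [mul_inv_eq_iff_eq_mul, mul_assoc, ← inv_mul_eq_iff_eq_mul]
      exact congrFun h k
    obtain rfl | hab := eq_or_ne a b
    · simpa [funext_iff] using h
    have hxy : x ≠ y := by
      rintro rfl
      exact (hc hab).1 (by simpa [eq_comm, mul_inv_eq_one] using hk ⟨0, hq⟩)
    exact absurd ⟨hxy, fun k => hk k ▸ (hc hab).2⟩ (hI hx hy hxy)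
  simpa [Nat.card_prod, Nat.card_fun] using Nat.card_le_card_of_injective _ hinj

theorem isIndep_B {n q : ℕ} (i : Fin n) (k : Fin q) : IsIndep (AGamma n q) (B n q i i k) := by
  intro u hu v hv _ huv
  apply huv.2 k i
  change ((u k : Perm (Fin n)) * (v k : Perm (Fin n))⁻¹) i = i
  rw [Perm.mul_apply, Perm.inv_eq_iff_eq.mpr (Eq.symm hv)]
  exact hu

theorem Nat.card_fun_apply_mem {ι α : Type*} [Fintype ι] [DecidableEq ι] [Finite α] (k : ι)
    (s : Set α) :
    Nat.card {f : ι → α // f k ∈ s} = Nat.card s * Nat.card α ^ (Fintype.card ι - 1) := by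
  refine (Nat.card_congr (((funSplitAt k α).subtypeEquiv (q := fun p => p.1 ∈ s)
    fun _ => Iff.rfl).trans prodSubtypeFstEquivSubtypeProd)).trans ?_
  rw [Nat.card_prod, Nat.card_fun, Nat.card_eq_fintype_card (α := {j // j ≠ k}),
    Fintype.card_subtype_compl, Fintype.card_subtype_eq]

theorem ncard_B {n q : ℕ} (i : Fin n) (k : Fin q) :
    (B n q i i k).ncard = Nat.card (stabilizer (alternatingGroup (Fin n)) i) *
      Nat.card (alternatingGroup (Fin n)) ^ (q - 1) := by
  have := Nat.card_fun_apply_mem k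
    ((stabilizer (alternatingGroup (Fin n)) i : Subgroup _) : Set (alternatingGroup (Fin n)))
  rwa [Fintype.card_fin] at this

theorem card_mul_card_stabilizer_alternatingGroup {α : Type*} [Fintype α] [DecidableEq α]
    (h : 3 ≤ Nat.card α) (a : α) :
    Nat.card α * Nat.card (stabilizer (alternatingGroup α) a) =
      Nat.card (alternatingGroup α) := by
  have := alternatingGroup.isPretransitive_of_three_le_card α h
  rw [← index_stabilizer_of_transitive (alternatingGroup α) a, Subgroup.index_mul_card]

/-- the independence number of `AΓ_n^q` is `(n-1)!·(n!)^{q-1}/2^q`. -/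
theorem indepNum_AGamma_pow (n q : ℕ) (hq : 1 ≤ q) (hn : 5 ≤ n) :
    IsGreatest {m : ℕ | ∃ I : Set (Fin q → alternatingGroup (Fin n)),
        IsIndep (AGamma n q) I ∧ I.ncard = m}
      (Nat.factorial (n - 1) * (Nat.factorial n) ^ (q - 1) / 2 ^ q) := by
  have : Nontrivial (Fin n) := Fin.nontrivial_iff_two_le.mpr (by omega)
  set A := Nat.card (alternatingGroup (Fin n))
  set S := Nat.card (stabilizer (alternatingGroup (Fin n)) (⟨0, by omega⟩ : Fin n))
  have hA : 2 * A = n.factorial := by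
    rw [two_mul_nat_card_alternatingGroup, Nat.card_perm, Nat.card_fin]
  have hS : n * S = A := by
    simpa only [Nat.card_fin] using card_mul_card_stabilizer_alternatingGroup
      (by rw [Nat.card_fin]; omega) (⟨0, by omega⟩ : Fin n)
  have hfac : (n - 1).factorial = 2 * S := by
    apply Nat.eq_of_mul_eq_mul_left (show 0 < n by omega)
    rw [Nat.mul_factorial_pred (by omega), ← hA, ← hS]; ring
  have hpow : ∀ a : ℕ, a ^ q = a * a ^ (q - 1) := fun a => by
    rw [← pow_succ', Nat.sub_add_cancel hq]
  have hformula : (n - 1).factorial * n.factorial ^ (q - 1) / 2 ^ q = S * A ^ (q - 1) := by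
    rw [hfac, ← hA, hpow, mul_pow, show 2 * S * (2 ^ (q - 1) * A ^ (q - 1)) =
      2 * 2 ^ (q - 1) * (S * A ^ (q - 1)) by ring, Nat.mul_div_cancel_left _ (by positivity)]
  rw [hformula]
  refine ⟨⟨_, isIndep_B ⟨0, by omega⟩ ⟨0, hq⟩, ncard_B _ _⟩, ?_⟩
  rintro m ⟨I, hI, rfl⟩
  obtain ⟨c, hc⟩ := exists_pairwise_adj_AGammaOne (n := n) (by omega)
  have hle := hI.ncard_mul_card_le hq hc
  rw [Nat.card_fin] at hle
  change I.ncard * n ≤ A ^ q at hle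
  refine Nat.le_of_mul_le_mul_left (c := n) ?_ (by omega)
  rwa [← mul_assoc, hS, ← hpow, mul_comm]
end

section
/- For every q ≥ 1 and n ≥ 5, the graph AΓ_n^q is connected. -/
open Pointwise

section Monoid

variable {M : Type*} [Monoid M] {s : Set M}

lemma Submonoid.exists_mem_pow_of_mem_closure {x : M} (hx : x ∈ Submonoid.closure s) :
    ∃ m : ℕ, x ∈ s ^ m := by
  induction hx using Submonoid.closure_induction_left with
  | one => exact ⟨0, by simp⟩
  | mul_left x hx y _ ih =>
    obtain ⟨m, hm⟩ := ih
    exact ⟨m + 1, pow_succ' s m ▸ Set.mul_mem_mul hx hm⟩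

lemma Set.one_mem_pow_of_two_le (h2 : (1 : M) ∈ s ^ 2) (h3 : (1 : M) ∈ s ^ 3) {j : ℕ}
    (hj : 2 ≤ j) : (1 : M) ∈ s ^ j := by
  rcases Nat.even_or_odd' j with ⟨k, rfl | rfl⟩
  · rw [pow_mul]
    exact Set.one_mem_pow h2
  · obtain ⟨k, rfl⟩ : ∃ i, k = i + 1 := ⟨k - 1, by omega⟩
    rw [show 2 * (k + 1) + 1 = 2 * k + 3 by ring, pow_add, pow_mul]
    simpa using Set.mul_mem_mul (Set.one_mem_pow h2) h3

/-- Since `1` is a product of exactly `j` elements of `s` for every `j ≥ 2`, the word lengths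
of the finitely many elements of `M` can all be padded to a common one. -/
lemma Set.exists_pow_eq_univ [Finite M] (hs : Submonoid.closure s = ⊤) (h2 : (1 : M) ∈ s ^ 2)
    (h3 : (1 : M) ∈ s ^ 3) : ∃ N : ℕ, s ^ N = Set.univ := by
  choose m hm using fun g : M => Submonoid.exists_mem_pow_of_mem_closure (hs ▸ Submonoid.mem_top g)
  obtain ⟨B, hB⟩ := _root_.Finite.exists_le m
  refine ⟨B + 2, Set.eq_univ_of_forall fun g => ?_⟩
  have hmB := hB g
  have hpad : (1 : M) ∈ s ^ (B + 2 - m g) := Set.one_mem_pow_of_two_le h2 h3 (by omega)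
  have := Set.subset_mul_left (s ^ m g) hpad (hm g)
  rwa [← pow_add, Nat.add_sub_cancel' (by omega)] at this

end Monoid

lemma finRotate_pow_apply_ne {n k : ℕ} (hk : 0 < k) (hkn : k < n) (i : Fin n) :
    (finRotate n ^ k) i ≠ i := by
  have hcycle := isCycle_finRotate_of_le (n := n) (by omega)
  have hsupp := support_finRotate_of_le (n := n) (by omega)
  have hi : finRotate n i ≠ i := by
    rw [← Equiv.Perm.mem_support, hsupp]
    exact Finset.mem_univ i
  intro h
  have hdvd := orderOf_dvd_of_pow_eq_one ((hcycle.pow_eq_one_iff' hi).2 h)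
  rw [hcycle.orderOf, hsupp, Finset.card_univ, Fintype.card_fin] at hdvd
  exact absurd (Nat.le_of_dvd hk hdvd) (by omega)

lemma one_notMem_evenDerangements {n : ℕ} (hn : 0 < n) : 1 ∉ evenDerangements n :=
  fun h => h ⟨0, hn⟩ rfl

lemma evenDerangements_conj {n : ℕ} {g : alternatingGroup (Fin n)}
    (x : alternatingGroup (Fin n)) (hg : g ∈ evenDerangements n) :
    x * g * x⁻¹ ∈ evenDerangements n := by
  intro i hi
  apply hg ((x : Equiv.Perm (Fin n))⁻¹ i)
  apply (x : Equiv.Perm (Fin n)).injective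
  simpa [Equiv.Perm.mul_apply] using hi

/-- A square of the rotation `i ↦ i + 1`, so even; it moves every point by `2`, its square by
`4`. -/
lemma exists_evenDerangement_sq_mem {n : ℕ} (hn : 5 ≤ n) :
    ∃ d ∈ evenDerangements n, d ^ 2 ∈ evenDerangements n := by
  have hsq : finRotate n ^ 2 ∈ alternatingGroup (Fin n) := by
    rw [Equiv.Perm.mem_alternatingGroup, map_pow, Int.units_sq]
  refine ⟨⟨finRotate n ^ 2, hsq⟩, finRotate_pow_apply_ne (by norm_num) (by omega), ?_⟩
  intro i
  rw [Subgroup.coe_pow, ← pow_mul]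
  exact finRotate_pow_apply_ne (by norm_num) (by omega) i

lemma closure_evenDerangements {n : ℕ} (hn : 5 ≤ n) :
    Subgroup.closure (evenDerangements n) = ⊤ := by
  have := alternatingGroup.isSimpleGroup (α := Fin n) (by simpa using hn)
  obtain ⟨d, hd, -⟩ := exists_evenDerangement_sq_mem hn
  have hnormal : Subgroup.normalClosure (evenDerangements n) = ⊤ := by
    refine Subgroup.normalClosure_normal.eq_bot_or_eq_top.resolve_left fun hbot => ?_
    have hd1 : d ∈ (⊥ : Subgroup _) := hbot ▸ Subgroup.subset_normalClosure hd
    exact one_notMem_evenDerangements (by omega) (Subgroup.mem_bot.1 hd1 ▸ hd)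
  refine eq_top_iff.2 (hnormal.symm.le.trans (Subgroup.closure_mono fun g hg => ?_))
  obtain ⟨a, ha, hag⟩ := Group.mem_conjugatesOfSet_iff.1 hg
  obtain ⟨x, rfl⟩ := isConj_iff.1 hag
  exact evenDerangements_conj x ha

lemma exists_evenDerangements_pow_eq_univ {n : ℕ} (hn : 5 ≤ n) :
    ∃ N : ℕ, evenDerangements n ^ N = Set.univ := by
  obtain ⟨d, hd, hd2⟩ := exists_evenDerangement_sq_mem hn
  refine Set.exists_pow_eq_univ ?_ ?_ ?_
  · rw [← Subgroup.closure_toSubmonoid_of_finite, closure_evenDerangements hn,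
      Subgroup.top_toSubmonoid]
  · simpa [pow_two] using Set.mul_mem_mul hd (evenDerangements_inv hd)
  · have h := Set.mul_mem_mul (Set.mul_mem_mul hd hd) (evenDerangements_inv hd2)
    rwa [← pow_two d, mul_inv_cancel, ← pow_two, ← pow_succ] at h

lemma AGamma_reachable_of_forall_mem {n q : ℕ} {σ τ : Fin q → alternatingGroup (Fin n)}
    (h : ∀ k, σ k * (τ k)⁻¹ ∈ evenDerangements n) : (AGamma n q).Reachable σ τ := by
  rcases eq_or_ne σ τ with rfl | hne
  · rfl
  · exact SimpleGraph.Adj.reachable ⟨hne, h⟩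

lemma AGamma_reachable_one_of_forall_mem_pow {n q m : ℕ} {σ : Fin q → alternatingGroup (Fin n)}
    (h : ∀ k, σ k ∈ evenDerangements n ^ m) : (AGamma n q).Reachable 1 σ := by
  induction m generalizing σ with
  | zero =>
    obtain rfl : σ = 1 := funext fun k => by simpa using h k
    rfl
  | succ m ih =>
    choose d hd τ hτ hdτ using fun k => Set.mem_mul.1 (pow_succ' (evenDerangements n) m ▸ h k)
    refine (ih hτ).trans (AGamma_reachable_of_forall_mem fun k => ?_).symm
    rw [← hdτ k, mul_inv_cancel_right]
    exact hd k

theorem AGamma_pow_connected_general (n q : ℕ) (hn : 5 ≤ n) :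
    (AGamma n q).Connected := by
  obtain ⟨N, hN⟩ := exists_evenDerangements_pow_eq_univ hn
  have hreach (σ : Fin q → alternatingGroup (Fin n)) : (AGamma n q).Reachable 1 σ :=
    AGamma_reachable_one_of_forall_mem_pow (m := N) fun k => hN ▸ Set.mem_univ (σ k)
  exact ⟨fun σ τ => (hreach σ).symm.trans (hreach τ)⟩

/-- `AΓ_n^q` is connected for `q ≥ 1`, `n ≥ 5`. -/
theorem AGamma_pow_connected (n q : ℕ) (hq : 1 ≤ q) (hn : 5 ≤ n) :
    (AGamma n q).Connected :=
  AGamma_pow_connected_general n q hn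
end

section
/- For n ≥ 5 and any g₁, g₂ ∈ A_n, there exists g ∈ A_n that is a common neighbor of g₁ and g₂ in the even derangement graph AΓ_n; that is, there exists g ∈ A_n with g·g₁⁻¹ ∈ ℰ_n and g·g₂⁻¹ ∈ ℰ_n. -/
/-!
Writing `u = g₂ g₁⁻¹`, it suffices to find an even permutation `σ` with `σ a ∉ {a, u a}` for
every `a`: then `g = σ g₁` works. Hall's marriage theorem gives such a `σ` of some sign as soon
as `n ≥ 4`, since every point is forbidden for at most two points and forbids at most two values.
For `n ≥ 6` an odd solution `σ` is repaired to `σ * swap i j`, where `j` avoids the at most five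
points that would break the condition at `i` or `j`; the case `n = 5` is settled by computation.
-/

open Finset Equiv

namespace Equiv.Perm

variable {α : Type*} [Fintype α] [DecidableEq α]

theorem exists_forall_apply_ne_and_ne (hα : 4 ≤ Fintype.card α) (u : Perm α) :
    ∃ σ : Perm α, ∀ a, σ a ≠ a ∧ σ a ≠ u a := by
  let allowed : α → Finset α := fun a => {a, u a}ᶜ
  have hall : ∀ s : Finset α, #s ≤ #(s.biUnion allowed) := by
    intro s
    by_cases hs : #s + 2 ≤ Fintype.card α
    · obtain rfl | ⟨a, ha⟩ := s.eq_empty_or_nonempty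
      · simp
      calc #s ≤ #(allowed a) := by
            rw [card_compl]; have := card_le_two (a := a) (b := u a); omega
        _ ≤ #(s.biUnion allowed) := card_le_card (subset_biUnion_of_mem allowed ha)
    · suffices s.biUnion allowed = univ by rw [this]; exact card_le_univ s
      refine eq_univ_of_forall fun b => ?_
      obtain ⟨a, ha, hab⟩ := not_subset.mp fun h : s ⊆ {b, u.symm b} => by
        have := card_le_card h; have := card_le_two (a := b) (b := u.symm b); omega
      refine mem_biUnion.mpr ⟨a, ha, ?_⟩
      simp only [allowed, mem_compl, mem_insert, mem_singleton, not_or] at hab ⊢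
      exact ⟨Ne.symm hab.1, fun h => hab.2 (by rw [h, symm_apply_apply])⟩
  obtain ⟨f, hf, hfa⟩ := (all_card_le_biUnion_card_iff_exists_injective allowed).mp hall
  refine ⟨ofBijective f (Finite.injective_iff_bijective.mp hf), fun a => ?_⟩
  simpa [allowed, not_or] using hfa a

theorem exists_sign_eq_neg_of_forall_apply_ne_and_ne (hα : 6 ≤ Fintype.card α) {u σ : Perm α}
    (hσ : ∀ a, σ a ≠ a ∧ σ a ≠ u a) :
    ∃ τ : Perm α, sign τ = -sign σ ∧ ∀ a, τ a ≠ a ∧ τ a ≠ u a := by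
  have : Nonempty α := Fintype.card_pos_iff.mp (by omega)
  let i : α := Classical.arbitrary α
  obtain ⟨j, -, hj⟩ := exists_mem_notMem_of_card_lt_card
    (s := {i, σ.symm i, σ.symm (u i), σ i, u.symm (σ i)}) (t := univ)
    (by rw [card_univ]; exact card_le_five.trans_lt (by omega))
  simp only [mem_insert, mem_singleton, not_or] at hj
  obtain ⟨hji, hj₁, hj₂, hj₃, hj₄⟩ := hj
  refine ⟨σ * swap i j, by rw [sign_mul, sign_swap (Ne.symm hji), mul_neg_one], fun a => ?_⟩
  rw [mul_apply]
  rcases eq_or_ne a i with rfl | hai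
  · rw [swap_apply_left]
    exact ⟨fun h => hj₁ (by rw [← h, symm_apply_apply]),
      fun h => hj₂ (by rw [← h, symm_apply_apply])⟩
  rcases eq_or_ne a j with rfl | haj
  · rw [swap_apply_right]
    exact ⟨fun h => hj₃ h.symm, fun h => hj₄ (by rw [h, symm_apply_apply])⟩
  rw [swap_apply_of_ne_of_ne hai haj]
  exact hσ a

set_option maxRecDepth 10000 in
theorem exists_sign_eq_one_forall_apply_ne_and_ne_fin_five :
    ∀ u : Perm (Fin 5), ∃ σ : Perm (Fin 5), sign σ = 1 ∧ ∀ a, σ a ≠ a ∧ σ a ≠ u a := by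
  decide

theorem exists_sign_eq_one_forall_apply_ne_and_ne (hα : 5 ≤ Fintype.card α) (u : Perm α) :
    ∃ σ : Perm α, sign σ = 1 ∧ ∀ a, σ a ≠ a ∧ σ a ≠ u a := by
  rcases hα.eq_or_lt with h5 | h6
  · let e : α ≃ Fin 5 := Fintype.equivFinOfCardEq h5.symm
    obtain ⟨σ, hσ, hσu⟩ := exists_sign_eq_one_forall_apply_ne_and_ne_fin_five (e.permCongr u)
    refine ⟨e.symm.permCongr σ, by rw [sign_permCongr, hσ], fun a => ?_⟩
    simpa [permCongr_apply, e.symm_apply_eq] using hσu (e a)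
  obtain ⟨σ, hσ⟩ := exists_forall_apply_ne_and_ne (by omega) u
  rcases Int.units_eq_one_or (sign σ) with h | h
  · exact ⟨σ, h, hσ⟩
  · obtain ⟨τ, hτ, hτu⟩ := exists_sign_eq_neg_of_forall_apply_ne_and_ne h6 hσ
    exact ⟨τ, by rw [hτ, h, neg_neg], hτu⟩

end Equiv.Perm

/-- any two vertices of `AΓ_n` (n ≥ 5) have a common neighbor. -/
theorem AGamma_common_neighbor (n : ℕ) (hn : 5 ≤ n) (g₁ g₂ : alternatingGroup (Fin n)) :
    ∃ g : alternatingGroup (Fin n),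
      g * g₁⁻¹ ∈ evenDerangements n ∧ g * g₂⁻¹ ∈ evenDerangements n := by
  obtain ⟨σ, hσ, hσu⟩ := Perm.exists_sign_eq_one_forall_apply_ne_and_ne
    (by rwa [Fintype.card_fin]) ((g₂ * g₁⁻¹ : alternatingGroup (Fin n)) : Perm (Fin n))
  refine ⟨⟨σ, hσ⟩ * g₁, fun i => ?_, fun i => ?_⟩
  · simpa using (hσu i).1
  · simpa using (hσu ((g₁ : Perm (Fin n)) ((g₂ : Perm (Fin n))⁻¹ i))).2
end

section
/- For every q ≥ 1 and n ≥ 5, the clique number of AΓ_n^q equals n. -/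
/-!
Fixing a coordinate `k` and a point `i`, the members `σ` of a clique of `AΓ_n^q` have pairwise
distinct values `σ_k(i)`, so a clique has at most `n` elements. Conversely, `n` even
permutations of `{1,…,n}` that pairwise disagree at every point (the rows of a Latin square)
give a clique of size `n` on the diagonal. For odd `n` the translations of `ℤ/n` will do. For
`n = 2p` take the maps `(x, y) ↦ (x + a, τ_{a,x}(y) + b)` of `ℤ/2 × ℤ/p`, which pairwise disagree
everywhere whatever the permutations `τ_{a,x}`. As plain translations, those with `a = 1` have
sign `(-1)^p`; choosing `τ_{1,1}` of sign `(-1)^p` and all other `τ_{a,x} = 1` makes them all even.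
-/

open Equiv Equiv.Perm

def PairwiseDiscordant {ι α : Type*} (f : ι → Perm α) : Prop :=
  Pairwise fun i j => ∀ x, f i x ≠ f j x

lemma PairwiseDiscordant.mul_inv_apply_ne {ι α : Type*} {f : ι → Perm α}
    (hf : PairwiseDiscordant f) {i j : ι} (hij : i ≠ j) (x : α) : (f i * (f j)⁻¹) x ≠ x := by
  simpa using hf hij ((f j)⁻¹ x)

lemma PairwiseDiscordant.permCongr {ι α β : Type*} {f : ι → Perm α}
    (hf : PairwiseDiscordant f) (e : α ≃ β) : PairwiseDiscordant fun i => e.permCongr (f i) :=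
  fun _ _ hij x => by simpa using hf hij (e.symm x)

lemma PairwiseDiscordant.comp_equiv {ι κ α : Type*} {f : ι → Perm α}
    (hf : PairwiseDiscordant f) (e : κ ≃ ι) : PairwiseDiscordant (f ∘ e) :=
  fun _ _ hij => hf (e.injective.ne hij)

section AddGroup

variable {G H : Type*} [AddGroup G] [AddGroup H]

lemma pairwiseDiscordant_addRight : PairwiseDiscordant (Equiv.addRight : G → Perm G) :=
  fun _ _ hij _ h => hij (add_left_cancel h)

lemma sign_addRight_of_odd_card [Fintype G] [DecidableEq G] (hG : Odd (Fintype.card G))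
    (g : G) : sign (Equiv.addRight g) = 1 := by
  have h : sign (Equiv.addRight g) ^ Fintype.card G = 1 := by
    rw [← map_pow, nsmul_addRight, ← Nat.card_eq_fintype_card, card_nsmul_eq_zero', addRight_zero,
      map_one]
  rwa [Int.units_pow_eq_pow_mod_two, Nat.odd_iff.mp hG, pow_one] at h

def skewShift (τ : G → G → Perm H) (g : G × H) : Perm (G × H) :=
  prodCongrLeft (fun _ => Equiv.addRight g.1) * prodCongrRight fun x => Equiv.addRight g.2 * τ g.1 x

@[simp]
lemma skewShift_apply (τ : G → G → Perm H) (g : G × H) (x : G) (y : H) :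
    skewShift τ g (x, y) = (x + g.1, τ g.1 x y + g.2) := rfl

lemma pairwiseDiscordant_skewShift (τ : G → G → Perm H) : PairwiseDiscordant (skewShift τ) := by
  rintro ⟨a, b⟩ ⟨a', b'⟩ hne ⟨x, y⟩ h
  simp only [skewShift_apply, Prod.mk.injEq] at h
  obtain rfl := add_left_cancel h.1
  exact hne (by rw [add_left_cancel h.2])

lemma sign_skewShift [Fintype G] [DecidableEq G] [Fintype H] [DecidableEq H]
    (τ : G → G → Perm H) (g : G × H) :
    sign (skewShift τ g) = sign (Equiv.addRight g.1) ^ Fintype.card H *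
      (sign (Equiv.addRight g.2) ^ Fintype.card G * ∏ x, sign (τ g.1 x)) := by
  simp only [skewShift, map_mul, sign_prodCongrLeft, sign_prodCongrRight, Finset.prod_const,
    Finset.card_univ, Finset.prod_mul_distrib]

end AddGroup

lemma exists_even_pairwiseDiscordant_of_odd {n : ℕ} (hn : Odd n) :
    ∃ f : Fin n → Perm (Fin n), (∀ i, sign (f i) = 1) ∧ PairwiseDiscordant f := by
  obtain ⟨m, rfl⟩ : ∃ m, n = m + 1 := ⟨n - 1, by obtain ⟨k, rfl⟩ := hn; omega⟩
  exact ⟨Equiv.addRight, sign_addRight_of_odd_card (by simpa using hn),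
    pairwiseDiscordant_addRight⟩

lemma exists_even_pairwiseDiscordant_two_mul {p : ℕ} (hp : 2 ≤ p) :
    ∃ f : Fin (2 * p) → Perm (Fin (2 * p)), (∀ i, sign (f i) = 1) ∧ PairwiseDiscordant f := by
  have : NeZero p := ⟨by omega⟩
  let c : Perm (Fin p) := swap ⟨0, by omega⟩ ⟨1, by omega⟩
  have hc : sign c = -1 := sign_swap (by simp [Fin.ext_iff])
  let τ : Fin 2 → Fin 2 → Perm (Fin p) := fun a x => if a = 1 ∧ x = 1 then c ^ p else 1
  have hsign : ∀ g, sign (skewShift τ g) = 1 := by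
    rintro ⟨a, b⟩
    rw [sign_skewShift, Fintype.card_fin, Fintype.card_fin, Int.units_sq, one_mul]
    fin_cases a
    · simp [τ]
    · have h1 : sign (Equiv.addRight (1 : Fin 2)) = -1 := by decide
      simp [τ, h1, hc, ← mul_pow]
  refine ⟨fun i => finProdFinEquiv.permCongr (skewShift τ (finProdFinEquiv.symm i)),
    fun i => by rw [sign_permCongr, hsign], ?_⟩
  exact ((pairwiseDiscordant_skewShift τ).comp_equiv _).permCongr _

lemma exists_even_pairwiseDiscordant {n : ℕ} (hn : n ≠ 2) :
    ∃ f : Fin n → Perm (Fin n), (∀ i, sign (f i) = 1) ∧ PairwiseDiscordant f := by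
  obtain rfl | hn0 := eq_or_ne n 0
  · exact ⟨finZeroElim, finZeroElim, fun i => i.elim0⟩
  obtain hodd | ⟨p, rfl⟩ := (Nat.even_or_odd n).symm
  · exact exists_even_pairwiseDiscordant_of_odd hodd
  rw [← two_mul]
  exact exists_even_pairwiseDiscordant_two_mul (by omega)

namespace AGamma

variable {n q : ℕ}

lemma injOn_apply_of_isClique {s : Set (Fin q → alternatingGroup (Fin n))}
    (hs : (AGamma n q).IsClique s) (k : Fin q) (i : Fin n) :
    s.InjOn fun σ => (σ k : Perm (Fin n)) i := by
  intro σ hσ τ hτ h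
  by_contra hne
  exact (hs hσ hτ hne).2 k ((τ k : Perm (Fin n)) i) (by simpa using h)

lemma cliqueNum_le (hq : 1 ≤ q) (hn : 1 ≤ n) : (AGamma n q).cliqueNum ≤ n := by
  obtain ⟨s, hs⟩ := (AGamma n q).exists_isNClique_cliqueNum
  rw [← hs.card_eq]
  simpa using Finset.card_le_card_of_injOn _ (fun _ _ => Finset.mem_univ _)
    (injOn_apply_of_isClique hs.isClique ⟨0, hq⟩ ⟨0, hn⟩)

lemma le_cliqueNum (hq : 1 ≤ q) {f : Fin n → Perm (Fin n)} (hsign : ∀ i, sign (f i) = 1)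
    (hf : PairwiseDiscordant f) : n ≤ (AGamma n q).cliqueNum := by
  let v : Fin n → Fin q → alternatingGroup (Fin n) :=
    fun i _ => ⟨f i, mem_alternatingGroup.mpr (hsign i)⟩
  have hv : Function.Injective v := fun i j h => by
    by_contra hij
    exact hf hij i (by rw [show f i = f j from congrArg Subtype.val (congrFun h ⟨0, hq⟩)])
  have hclique : (AGamma n q).IsClique (Finset.univ.image v : Set _) := by
    simp only [Finset.coe_image, Finset.coe_univ, Set.image_univ]
    rintro _ ⟨i, rfl⟩ _ ⟨j, rfl⟩ hne
    exact ⟨hne, fun _ => hf.mul_inv_apply_ne (fun h => hne (congrArg v h))⟩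
  simpa [Finset.card_image_of_injective _ hv] using hclique.card_le_cliqueNum

end AGamma

/-- the clique number of `AΓ_n^q` equals `n` for `q ≥ 1`, `n ≥ 5`. -/
theorem AGamma_pow_cliqueNum (n q : ℕ) (hq : 1 ≤ q) (hn : 5 ≤ n) :
    (AGamma n q).cliqueNum = n := by
  obtain ⟨f, hsign, hf⟩ := exists_even_pairwiseDiscordant (n := n) (by omega)
  exact (AGamma.cliqueNum_le hq (by omega)).antisymm (AGamma.le_cliqueNum hq hsign hf)
end

section
/- Let q ≥ 1 and n ≥ 5, and let φ be an automorphism of AΓ_n^q. If φ(B_{i,j}^{(k)}) = B_{i,j}^{(k)} (as sets of vertices) for every i, j ∈ {1,…,n} and every k ∈ {1,…,q}, then φ is the identity map. -/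
theorem eq_of_forall_mem_B_imp {n q : ℕ} {σ τ : Fin q → alternatingGroup (Fin n)}
    (h : ∀ i j k, σ ∈ B n q i j k → τ ∈ B n q i j k) : τ = σ :=
  funext fun k => Subtype.ext <| Equiv.ext fun i => h i _ k rfl

theorem AGamma_pow_aut_faithful_on_B_general (n q : ℕ)
    (φ : (AGamma n q) ≃g (AGamma n q))
    (h : ∀ (i j : Fin n) (k : Fin q), (fun σ => φ σ) '' B n q i j k = B n q i j k) :
    ∀ σ, φ σ = σ := fun _ =>
  eq_of_forall_mem_B_imp fun i j k hσ => h i j k ▸ Set.mem_image_of_mem _ hσ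

/-- an automorphism of `AΓ_n^q` fixing every `B_{i,j}^{(k)}` setwise is
the identity. -/
theorem AGamma_pow_aut_faithful_on_B (n q : ℕ) (hq : 1 ≤ q) (hn : 5 ≤ n)
    (φ : (AGamma n q) ≃g (AGamma n q))
    (h : ∀ (i j : Fin n) (k : Fin q), (fun σ => φ σ) '' B n q i j k = B n q i j k) :
    ∀ σ, φ σ = σ :=
  AGamma_pow_aut_faithful_on_B_general n q φ h
end

section
/- Let q ≥ 1 and n ≥ 5. For i, j, i', j' ∈ {1,…,n} and k, k' ∈ {1,…,q}, the intersection B_{i,j}^{(k)} ∩ B_{i',j'}^{(k')} is empty if and only if k = k' and exactly one of the equalities i = i' and j = j' holds. -/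
open Equiv MulAction

namespace alternatingGroup

variable {α : Type*} [Fintype α] [DecidableEq α]

theorem exists_apply_eq (h : 3 ≤ Nat.card α) (a b : α) :
    ∃ g : alternatingGroup α, (g : Perm α) a = b :=
  have := isPretransitive_of_three_le_card α h
  exists_smul_eq (alternatingGroup α) a b

theorem exists_apply_eq_and_apply_eq (h : 4 ≤ Nat.card α) {a b c d : α} (hab : a = b ↔ c = d) :
    ∃ g : alternatingGroup α, (g : Perm α) a = c ∧ (g : Perm α) b = d := by
  by_cases hab' : a = b
  · subst hab'
    obtain rfl := hab.mp rfl
    obtain ⟨g, hg⟩ := exists_apply_eq (by omega) a c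
    exact ⟨g, hg, hg⟩
  have := isMultiplyPretransitive α
  have : IsMultiplyPretransitive (alternatingGroup α) α 2 :=
    isMultiplyPretransitive_of_le (n := Nat.card α - 2) (by omega) (by omega)
  exact is_two_pretransitive_iff.mp this hab' (mt hab.mpr hab')

end alternatingGroup

section B

variable {n q : ℕ} {i j i' j' : Fin n} {k k' : Fin q}

theorem B_inter_B_nonempty_of_ne (hn : 3 ≤ n) (hk : k ≠ k') :
    (B n q i j k ∩ B n q i' j' k').Nonempty := by
  have hcard : 3 ≤ Nat.card (Fin n) := by simpa using hn
  obtain ⟨g, hg⟩ := alternatingGroup.exists_apply_eq hcard i j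
  obtain ⟨g', hg'⟩ := alternatingGroup.exists_apply_eq hcard i' j'
  refine ⟨Function.update (Function.update 1 k g) k' g', ?_, ?_⟩
  · simpa [B, Function.update_of_ne hk] using hg
  · simpa [B] using hg'

theorem B_inter_B_eq_empty_iff (hn : 4 ≤ n) :
    B n q i j k ∩ B n q i' j' k = ∅ ↔ ¬(i = i' ↔ j = j') := by
  refine ⟨fun h hij => ?_, fun hij => Set.eq_empty_of_forall_notMem fun σ hσ => hij ?_⟩
  · obtain ⟨g, hg, hg'⟩ := alternatingGroup.exists_apply_eq_and_apply_eq (by simpa using hn) hij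
    have : (B n q i j k ∩ B n q i' j' k).Nonempty := ⟨fun _ => g, hg, hg'⟩
    exact this.ne_empty h
  · obtain ⟨hσ, hσ'⟩ : (σ k : Perm (Fin n)) i = j ∧ (σ k : Perm (Fin n)) i' = j' := hσ
    rw [← hσ, ← hσ', (σ k : Perm (Fin n)).injective.eq_iff]

end B

theorem B_inter_empty_iff_general (n q : ℕ) (hn : 5 ≤ n)
    (i j i' j' : Fin n) (k k' : Fin q) :
    B n q i j k ∩ B n q i' j' k' = ∅ ↔ (k = k' ∧ Xor' (i = i') (j = j')) := by
  by_cases hk : k = k'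
  · subst hk
    rw [Xor', xor_iff_not_iff, and_iff_right rfl]
    exact B_inter_B_eq_empty_iff (by omega)
  · simpa [hk] using (B_inter_B_nonempty_of_ne (by omega) hk).ne_empty

/-- `B_{i,j}^{(k)} ∩ B_{i',j'}^{(k')} = ∅` iff `k = k'` and exactly one of
`i = i'`, `j = j'` holds. -/
theorem B_inter_empty_iff (n q : ℕ) (hq : 1 ≤ q) (hn : 5 ≤ n)
    (i j i' j' : Fin n) (k k' : Fin q) :
    B n q i j k ∩ B n q i' j' k' = ∅ ↔ (k = k' ∧ Xor' (i = i') (j = j')) :=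
  B_inter_empty_iff_general n q hn i j i' j' k k'
end
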